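/- arXiv:1003.2361 — 4 statements merged into one kernel-verified Lean document; each statement's English description precedes it below -/
import Mathlib

section
/- Let r, s, C ∈ ℂ with s = r^j for some integer j ≥ 0 and C ≠ 0, and with r ≠ 0. Let f(x,y) = Σ_{i=0}^{b} g_i(x) y^i be a two-variable polynomial over ℂ of degree (a,b) in the ordering where (i,j) > (i',j') iff j > j' or (j = j' and i > i'), and assume deg g_i(x) < o(r) for each 0 ≤ i ≤ b (where o(r) is the multiplicative order of r, possibly ∞). If f(r·x, s·C·x^j + s·y) = r^a s^b · f(x,y) as polynomials, then f(x,y) is a constant multiple of x^a (in particular b = 0). -/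
/-!
Write `g_i` for the coefficients of `f` and `σ g = g(r x)`. By Taylor expansion in `y`, the
`y^b`-coefficient of the functional equation reads `σ g_b = r^a g_b`; since `r^k ≠ r^a` for
`k < a < o(r)`, this forces `g_b = c x^a`. If `b > 0`, the `y^(b-1)`-coefficient reads
`σ g_(b-1) + b c r^a s C x^(a+j) = r^(a+j) g_(b-1)` (using `s = r^j`). As `x^(a+j)` is an
eigenvector of `σ` with eigenvalue `r^(a+j)`, comparing `x^(a+j)`-coefficients gives
`b c r^a s C = 0`, a contradiction.
-/

open Polynomial

namespace Polynomial

section CommRing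

variable {R : Type*} [CommRing R] (p : R[X]) (u v : R)

theorem coeff_comp_C_add_C_mul_X (k : ℕ) :
    (p.comp (C u + C v * X)).coeff k = v ^ k * (hasseDeriv k p).eval u := by
  rw [show (C u + C v * X : R[X]) = (X + C u).comp (C v * X) by simp [add_comm],
    ← comp_assoc, comp_C_mul_X_coeff, ← taylor_apply, taylor_coeff, mul_comm]

theorem coeff_comp_C_add_C_mul_X_of_natDegree_le {n : ℕ} (h : p.natDegree ≤ n) :
    (p.comp (C u + C v * X)).coeff n = v ^ n * p.coeff n := by
  have hD : (hasseDeriv n p).natDegree = 0 :=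
    Nat.le_zero.mp ((natDegree_hasseDeriv_le p n).trans (by omega))
  rw [coeff_comp_C_add_C_mul_X, eq_C_of_natDegree_eq_zero hD, eval_C, hasseDeriv_coeff,
    zero_add, Nat.choose_self, Nat.cast_one, one_mul]

theorem coeff_comp_C_add_C_mul_X_of_natDegree_le_succ {n : ℕ} (h : p.natDegree ≤ n + 1) :
    (p.comp (C u + C v * X)).coeff n = v ^ n * (p.coeff n + (n + 1) * p.coeff (n + 1) * u) := by
  have hD : (hasseDeriv n p).natDegree ≤ 1 := (natDegree_hasseDeriv_le p n).trans (by omega)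
  rw [coeff_comp_C_add_C_mul_X, eq_X_add_C_of_natDegree_le_one hD]
  simp only [hasseDeriv_coeff, eval_add, eval_mul, eval_C, eval_X, zero_add, Nat.choose_self,
    add_comm 1 n, Nat.choose_succ_self_right]
  push_cast
  ring

end CommRing

theorem eq_C_mul_X_pow_of_comp_C_mul_X_eq {R : Type*} [CommRing R] [IsDomain R] {p : R[X]}
    {r : R} (hr : r ≠ 0) (hroot : ∀ k, 0 < k → r ^ k = 1 → p.natDegree < k)
    (h : p.comp (C r * X) = C (r ^ p.natDegree) * p) :
    p = C p.leadingCoeff * X ^ p.natDegree := by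
  ext k
  rw [coeff_C_mul_X_pow]
  split_ifs with hk
  · rw [hk, leadingCoeff]
  by_contra hpk
  have hkn : k < p.natDegree := (le_natDegree_of_ne_zero hpk).lt_of_ne hk
  have hpow : r ^ k = r ^ p.natDegree := by
    have := congrArg (coeff · k) h
    simp only [comp_C_mul_X_coeff, coeff_C_mul] at this
    exact mul_left_cancel₀ hpk (this.trans (mul_comm _ _))
  have hunit : r ^ (p.natDegree - k) = 1 := by
    refine mul_left_cancel₀ (pow_ne_zero k hr) ?_
    rw [← pow_add, Nat.add_sub_cancel' hkn.le, hpow, mul_one]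
  exact absurd (hroot _ (by omega) hunit) (by omega)

theorem eq_zero_of_comp_C_mul_X_add_C_mul_X_pow_eq {R : Type*} [CommRing R] {g : R[X]}
    {r e : R} {n : ℕ} (h : g.comp (C r * X) + C e * X ^ n = C (r ^ n) * g) : e = 0 := by
  have hn := congrArg (coeff · n) h
  simp only [coeff_add, comp_C_mul_X_coeff, coeff_C_mul, coeff_X_pow_self, mul_one] at hn
  linear_combination hn

end Polynomial

theorem stmt5 (r s C0 : ℂ) (j : ℕ) (hr : r ≠ 0) (hs : s = r ^ j) (hC : C0 ≠ 0)
    (f : Polynomial (Polynomial ℂ)) (a b : ℕ)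
    (hb : b = f.natDegree) (ha : a = (f.coeff b).natDegree)
    (hdeg : ∀ k : ℕ, 0 < k → r ^ k = 1 → ∀ i ≤ b, (f.coeff i).natDegree < k)
    (heq : (f.map (aeval (C r * X)).toRingHom).comp
        (C (C s * C C0 * X ^ j) + C (C s) * X)
      = C (C (r ^ a * s ^ b)) * f) :
    ∃ c : ℂ, f = C (C c * X ^ a) := by
  subst hs
  have hrj : r ^ j ≠ 0 := pow_ne_zero j hr
  set P := f.map (aeval (C r * X)).toRingHom
  have hP : ∀ i, P.coeff i = (f.coeff i).comp (C r * X) := fun i => coeff_map _ i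
  have hPdeg : P.natDegree ≤ b := hb ▸ natDegree_map_le
  have hcoeff : ∀ k, (P.comp (C (C (r ^ j) * C C0 * X ^ j) + C (C (r ^ j)) * X)).coeff k
      = C (r ^ a * (r ^ j) ^ b) * f.coeff k := fun k => by rw [heq, coeff_C_mul]
  have htop : (f.coeff b).comp (C r * X) = C (r ^ a) * f.coeff b := by
    have h := hcoeff b
    rw [coeff_comp_C_add_C_mul_X_of_natDegree_le _ _ _ hPdeg, hP, mul_comm (r ^ a), C_mul,
      ← C_pow, mul_assoc] at h
    exact mul_left_cancel₀ (C_ne_zero.mpr (pow_ne_zero b hrj)) h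
  have hmono : f.coeff b = C (f.coeff b).leadingCoeff * X ^ a := by
    rw [ha] at htop ⊢
    exact eq_C_mul_X_pow_of_comp_C_mul_X_eq hr (fun k hk hrk => hdeg k hk hrk b le_rfl) htop
  cases b with
  | zero => exact ⟨_, (eq_C_of_natDegree_eq_zero hb.symm).trans (congrArg C hmono)⟩
  | succ m =>
    have hlead : (f.coeff (m + 1)).leadingCoeff ≠ 0 := by
      rw [hb, leadingCoeff_ne_zero, ← leadingCoeff, leadingCoeff_ne_zero]
      exact ne_zero_of_natDegree_gt (hb ▸ m.lt_add_one)
    have h := hcoeff m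
    rw [coeff_comp_C_add_C_mul_X_of_natDegree_le_succ _ _ _ hPdeg, hP, hP, htop, hmono] at h
    set c := (f.coeff (m + 1)).leadingCoeff
    have hsub : (f.coeff m).comp (C r * X) + C ((m + 1) * r ^ a * c * r ^ j * C0) * X ^ (a + j)
        = C (r ^ (a + j)) * f.coeff m := by
      refine mul_left_cancel₀ (pow_ne_zero m (C_ne_zero.mpr hrj)) ?_
      simp only [C_mul, C_pow, C_add, C_1, C_eq_natCast] at h ⊢
      linear_combination h
    have := eq_zero_of_comp_C_mul_X_add_C_mul_X_pow_eq hsub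
    simp [Nat.cast_add_one_ne_zero, hr, hlead, hrj, hC] at this
end

section
/- Let r, s ∈ ℂ^× and let φ(x) = Σ_{i=0}^{n} a_i x^i ∈ ℂ[x]. If s ≠ r^j for every 0 ≤ j ≤ n, then there exists a polynomial ψ ∈ ℂ[x] with s·ψ(x) − ψ(r·x) = φ(x). More generally, if for every 0 ≤ j ≤ n with s = r^j one has a_j = 0, then such a ψ exists. -/
/-! The operator `ψ ↦ s • ψ - ψ(r x)` is diagonal in the monomial basis, acting on `x ^ j` by the
scalar `s - r ^ j`. So `φ` is in its image as soon as `φ` has no component along the monomials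
whose eigenvalue vanishes, and then `ψ` is obtained by dividing each coefficient of `φ`. -/

open Polynomial

namespace Polynomial

theorem coeff_C_mul_sub_comp_C_mul_X {R : Type*} [CommRing R] (r s : R) (ψ : R[X]) (j : ℕ) :
    (C s * ψ - ψ.comp (C r * X)).coeff j = (s - r ^ j) * ψ.coeff j := by
  rw [coeff_sub, coeff_C_mul, comp_C_mul_X_coeff]
  ring

theorem exists_C_mul_sub_comp_C_mul_X_eq {K : Type*} [Field K] (r s : K) (φ : K[X])
    (h : ∀ j, s = r ^ j → φ.coeff j = 0) :
    ∃ ψ : K[X], C s * ψ - ψ.comp (C r * X) = φ := by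
  refine ⟨∑ j ∈ φ.support, monomial j (φ.coeff j / (s - r ^ j)), ?_⟩
  ext j
  rw [coeff_C_mul_sub_comp_C_mul_X, finsetSum_coeff]
  simp only [coeff_monomial, Finset.sum_ite_eq']
  by_cases hsr : s = r ^ j
  · simp [h j hsr]
  · split_ifs with hφ
    · exact mul_div_cancel₀ _ (sub_ne_zero.mpr hsr)
    · rw [notMem_support_iff.mp hφ, mul_zero]

end Polynomial

theorem stmt11_general (r s : ℂ) (n : ℕ) (φ : ℂ[X])
    (hφ : φ.natDegree ≤ n)
    (h : ∀ j ≤ n, s = r ^ j → φ.coeff j = 0) :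
    ∃ ψ : ℂ[X], C s * ψ - ψ.comp (C r * X) = φ := by
  refine exists_C_mul_sub_comp_C_mul_X_eq r s φ fun j hsr => ?_
  by_cases hj : j ≤ n
  · exact h j hj hsr
  · exact coeff_eq_zero_of_natDegree_lt (hφ.trans_lt (not_le.mp hj))

theorem stmt11 (r s : ℂ) (hr : r ≠ 0) (hs : s ≠ 0) (n : ℕ) (φ : ℂ[X])
    (hφ : φ.natDegree ≤ n)
    (h : ∀ j ≤ n, s = r ^ j → φ.coeff j = 0) :
    ∃ ψ : ℂ[X], C s * ψ - ψ.comp (C r * X) = φ :=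
  stmt11_general r s n φ hφ h
end

section
/- Let A be a ℤ-graded associative ℂ-algebra, let r ∈ ℂ^× not be a root of unity, and let h ∈ A_0 satisfy h·x = r^i · x·h for every i ∈ ℤ and x ∈ A_i. Let I be a two-sided ideal of A and x ∈ I with homogeneous decomposition x = Σ_i x_i (x_i ∈ A_i) of length ℓ(x) (the number of nonzero components). Then x_i · h^{ℓ(x)−1} ∈ I for every i ∈ ℤ. -/
/-!
Multiplying `x ∈ I` on the left by `h` and subtracting `r ^ j • (x * h)` gives an element of `I`
whose `k`-th component is `(r ^ k - r ^ j) • (x_k * h)`. For `j` in the support of `x` this kills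
the `j`-th component and rescales the others by nonzero constants, since `r ^ k ≠ r ^ j` for
`k ≠ j` when `r` is not a root of unity. Repeating this `ℓ(x) - 1` times isolates
`x_i * h ^ (ℓ(x) - 1)` up to a nonzero scalar.
-/

open DirectSum

theorem zpow_ne_zpow_of_not_isOfFinOrder {G : Type*} [GroupWithZero G] {r : G} (hr : r ≠ 0)
    (hr' : ¬IsOfFinOrder r) {i j : ℤ} (hij : i ≠ j) : r ^ i ≠ r ^ j := by
  intro heq
  refine hr' (isOfFinOrder_iff_zpow_eq_one.mpr ⟨i - j, sub_ne_zero.mpr hij, ?_⟩)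
  rw [zpow_sub₀ hr, heq, div_self (zpow_ne_zero _ hr)]

namespace TwoSidedIdeal

variable {K A : Type*} [Ring A] (I : TwoSidedIdeal A)

theorem smul_mem_of_algebra [CommSemiring K] [Algebra K A] (c : K) {a : A} (ha : a ∈ I) :
    c • a ∈ I := by
  rw [Algebra.smul_def]
  exact I.mul_mem_left _ _ ha

theorem smul_mem_iff_of_ne_zero [Field K] [Algebra K A] {c : K} (hc : c ≠ 0) {a : A} :
    c • a ∈ I ↔ a ∈ I := by
  refine ⟨fun hca => ?_, I.smul_mem_of_algebra c⟩
  simpa [smul_smul, inv_mul_cancel₀ hc] using I.smul_mem_of_algebra c⁻¹ hca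

end TwoSidedIdeal

section Graded

variable {K A : Type*} [Field K] [Ring A] [Algebra K A]

def twistedCommutator (h : A) (c : K) (x : A) : A := h * x - c • (x * h)

theorem twistedCommutator_mem (I : TwoSidedIdeal A) (h : A) (c : K) {x : A} (hx : x ∈ I) :
    twistedCommutator h c x ∈ I :=
  I.sub_mem (I.mul_mem_left _ _ hx) (I.smul_mem_of_algebra c (I.mul_mem_right _ _ hx))

variable (𝒜 : ℤ → Submodule K A) [GradedAlgebra 𝒜]

theorem coe_decompose_twistedCommutator {h : A} {r : K} (hh : h ∈ 𝒜 0)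
    (hcomm : ∀ (i : ℤ), ∀ x ∈ 𝒜 i, h * x = (r ^ i) • (x * h)) (c : K) (x : A) (k : ℤ) :
    (decompose 𝒜 (twistedCommutator h c x) k : A) = (r ^ k - c) • (decompose 𝒜 x k * h) := by
  have hleft : (decompose 𝒜 (h * x) k : A) = h * decompose 𝒜 x k := by
    rw [← coe_decompose_mul_add_of_left_mem 𝒜 hh, zero_add]
  have hright : (decompose 𝒜 (x * h) k : A) = decompose 𝒜 x k * h := by
    rw [← coe_decompose_mul_add_of_right_mem 𝒜 hh, add_zero]
  simp only [twistedCommutator, decompose_sub, decompose_smul, DirectSum.sub_apply,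
    DirectSum.smul_apply, Submodule.coe_sub, Submodule.coe_smul, hleft, hright,
    hcomm k _ (SetLike.coe_mem _), sub_smul]

theorem support_decompose_twistedCommutator_subset [∀ (i : ℤ) (y : 𝒜 i), Decidable (y ≠ 0)]
    {h : A} {r : K} (hh : h ∈ 𝒜 0) (hcomm : ∀ (i : ℤ), ∀ x ∈ 𝒜 i, h * x = (r ^ i) • (x * h))
    (x : A) (j : ℤ) :
    (decompose 𝒜 (twistedCommutator h (r ^ j) x)).support ⊆ (decompose 𝒜 x).support.erase j := by
  intro k hk
  have hk' : (decompose 𝒜 (twistedCommutator h (r ^ j) x) k : A) ≠ 0 := by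
    simpa [DFinsupp.mem_support_iff] using hk
  rw [coe_decompose_twistedCommutator 𝒜 hh hcomm] at hk'
  refine Finset.mem_erase.mpr ⟨?_, DFinsupp.mem_support_iff.mpr fun hxk => hk' ?_⟩
  · rintro rfl
    simp at hk'
  · simp [hxk]

theorem coe_decompose_eq_self_of_support_subset_singleton
    [∀ (i : ℤ) (y : 𝒜 i), Decidable (y ≠ 0)] {x : A} {i : ℤ}
    (hx : (decompose 𝒜 x).support ⊆ {i}) : (decompose 𝒜 x i : A) = x := by
  conv_rhs => rw [← sum_support_decompose 𝒜 x]
  rw [Finset.sum_subset hx fun k _ hk => by simpa using hk, Finset.sum_singleton]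

theorem coe_decompose_mul_pow_mem_of_card_support_le [∀ (i : ℤ) (y : 𝒜 i), Decidable (y ≠ 0)]
    {r : K} (hr : r ≠ 0) (hr' : ¬IsOfFinOrder r) {h : A} (hh : h ∈ 𝒜 0)
    (hcomm : ∀ (i : ℤ), ∀ x ∈ 𝒜 i, h * x = (r ^ i) • (x * h)) (I : TwoSidedIdeal A) (n : ℕ) :
    ∀ x ∈ I, (decompose 𝒜 x).support.card ≤ n + 1 → ∀ i, (decompose 𝒜 x i : A) * h ^ n ∈ I := by
  induction n with
  | zero =>
    intro x hx hcard i
    by_cases hi : i ∈ (decompose 𝒜 x).support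
    · have hsub : (decompose 𝒜 x).support ⊆ {i} := fun k hk =>
        Finset.mem_singleton.mpr (Finset.card_le_one.mp hcard k hk i hi)
      simpa [coe_decompose_eq_self_of_support_subset_singleton 𝒜 hsub] using hx
    · simp [DFinsupp.notMem_support_iff.mp hi, I.zero_mem]
  | succ n ih =>
    intro x hx hcard i
    by_cases hsub : (decompose 𝒜 x).support ⊆ {i}
    · rw [coe_decompose_eq_self_of_support_subset_singleton 𝒜 hsub]
      exact I.mul_mem_right _ _ hx
    obtain ⟨j, hj, hji⟩ := Finset.not_subset.mp hsub
    have hy_card : (decompose 𝒜 (twistedCommutator h (r ^ j) x)).support.card ≤ n + 1 := by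
      refine (Finset.card_le_card
        (support_decompose_twistedCommutator_subset 𝒜 hh hcomm x j)).trans ?_
      rw [Finset.card_erase_of_mem hj]
      omega
    have hrij : r ^ i - r ^ j ≠ 0 :=
      sub_ne_zero.mpr (zpow_ne_zpow_of_not_isOfFinOrder hr hr' (Ne.symm (by simpa using hji)))
    have hy := ih _ (twistedCommutator_mem I h _ hx) hy_card i
    rwa [coe_decompose_twistedCommutator 𝒜 hh hcomm, smul_mul_assoc,
      I.smul_mem_iff_of_ne_zero hrij, mul_assoc, ← pow_succ'] at hy

end Graded

theorem stmt14 {A : Type*} [Ring A] [Algebra ℂ A] (𝒜 : ℤ → Submodule ℂ A)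
    [GradedAlgebra 𝒜] [∀ (i : ℤ) (y : 𝒜 i), Decidable (y ≠ 0)]
    (r : ℂ) (hr : r ≠ 0) (hru : ∀ k : ℕ, 0 < k → r ^ k ≠ 1)
    (h : A) (hh : h ∈ 𝒜 0)
    (hcomm : ∀ (i : ℤ), ∀ x ∈ 𝒜 i, h * x = (r ^ i) • (x * h))
    (I : TwoSidedIdeal A) (x : A) (hx : x ∈ I) :
    ∀ i : ℤ, (DirectSum.decompose 𝒜 x i : A) *
      h ^ ((DirectSum.decompose 𝒜 x).support.card - 1) ∈ I := by
  have hr' : ¬IsOfFinOrder r := fun hfin =>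
    let ⟨k, hk, hrk⟩ := isOfFinOrder_iff_pow_eq_one.mp hfin
    hru k hk hrk
  exact coe_decompose_mul_pow_mem_of_card_support_le 𝒜 hr hr' hh hcomm I _ x hx le_tsub_add
end

section
/- Let A be a ℂ-algebra and M a simple A-module whose dimension over ℂ is countable. If ξ : M → M is a ℂ-linear map commuting with the action of every element of A, then ξ acts as a scalar: there exists c ∈ ℂ with ξ(v) = c·v for all v ∈ M. -/
open Polynomial in
theorem aux_li {F D : Type*} [Field F] [DivisionRing D] [Algebra F D] {x : D}
    (H : Transcendental F x) :
    LinearIndependent F fun a : F ↦ (x - algebraMap F D a)⁻¹ := by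
  classical
  rw [transcendental_iff] at H
  refine linearIndependent_iff'.2 fun s m hm i hi ↦ ?_
  have hnz (a : F) : x - algebraMap F D a ≠ 0 := fun h ↦
    X_sub_C_ne_zero a <| H (X - C a) (by rw [map_sub, aeval_X, aeval_C]; exact h)
  let b : D := aeval x (s.prod fun j ↦ (X : F[X]) - C j)
  have h1 : ∀ i ∈ s, m i • (b * (x - algebraMap F D i)⁻¹) =
      m i • aeval x ((s.erase i).prod fun j ↦ (X : F[X]) - C j) := fun i hi ↦ by
    have hb : b = aeval x ((s.erase i).prod fun j ↦ (X : F[X]) - C j) * (x - algebraMap F D i) := by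
      rw [show b = aeval x (s.prod fun j ↦ (X : F[X]) - C j) from rfl,
        ← s.prod_erase_mul _ hi, map_mul, map_sub, aeval_X, aeval_C]
    rw [hb, mul_inv_cancel_right₀ (hnz i)]
  replace hm := congr(b * $(hm))
  simp_rw [mul_zero, Finset.mul_sum, mul_smul_comm, Finset.sum_congr rfl h1] at hm
  let p : Polynomial F := s.sum fun i ↦ .C (m i) * (s.erase i).prod fun j ↦ .X - .C j
  have hp : aeval x p = 0 := by
    simp_rw [← hm, p, map_sum, map_mul, aeval_C, Algebra.smul_def]
  replace hm := congr(Polynomial.aeval i $(H p hp))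
  have h2 : ∀ j ∈ s.erase i, m j * ((s.erase j).prod fun x ↦ i - x) = 0 := fun j hj ↦ by
    have := Finset.mem_erase_of_ne_of_mem (Finset.ne_of_mem_erase hj).symm hi
    simp_rw [← (s.erase j).prod_erase_mul _ this, sub_self, mul_zero]
  simp_rw [map_zero, p, map_sum, map_mul, map_prod, map_sub, aeval_X,
    aeval_C, Algebra.algebraMap_self_apply, ← s.sum_erase_add _ hi,
    Finset.sum_eq_zero h2, zero_add] at hm
  exact eq_zero_of_ne_zero_of_mul_right_eq_zero (Finset.prod_ne_zero_iff.2 fun j hj ↦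
    sub_ne_zero.2 (Finset.ne_of_mem_erase hj).symm) hm

theorem stmt15 {A : Type*} [Ring A] [Algebra ℂ A] {M : Type*} [AddCommGroup M]
    [Module ℂ M] [Module A M] [IsScalarTower ℂ A M]
    (hsimple : IsSimpleModule A M)
    (hcount : ∃ S : Set M, S.Countable ∧ Submodule.span ℂ S = ⊤)
    (ξ : M →ₗ[ℂ] M) (hξ : ∀ (a : A) (v : M), ξ (a • v) = a • ξ v) :
    ∃ c : ℂ, ∀ v : M, ξ v = c • v := by
  classical
  haveI := hsimple
  haveI : Nontrivial M := IsSimpleModule.nontrivial A M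
  set D := Module.End A M
  let x : D := { toFun := ξ, map_add' := ξ.map_add, map_smul' := fun a v => hξ a v }
  -- injective ℂ-linear map from D to M
  obtain ⟨m₀, hm₀⟩ := exists_ne (0 : M)
  let φ : D →ₗ[ℂ] M :=
    { toFun := fun f => f m₀, map_add' := fun f g => rfl,
      map_smul' := fun c f => rfl }
  have hφ : Function.Injective φ := by
    intro f g h
    by_contra hne
    have hfg : f - g ≠ 0 := sub_ne_zero.2 hne
    have hker : LinearMap.ker (f - g) = ⊤ ∨ LinearMap.ker (f - g) = ⊥ := by
      rcases eq_bot_or_eq_top (LinearMap.ker (f - g)) with h' | h'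
      · exact Or.inr h'
      · exact Or.inl h'
    rcases hker with h' | h'
    · exact hfg (LinearMap.ker_eq_top.mp h')
    · have : m₀ ∈ LinearMap.ker (f - g) := by
        rw [LinearMap.mem_ker, LinearMap.sub_apply, sub_eq_zero]
        exact h
      rw [h'] at this
      exact hm₀ this
  -- rank of M is countable
  obtain ⟨S, hScount, hSspan⟩ := hcount
  have hrank : Module.rank ℂ M ≤ Cardinal.aleph0 := by
    have := rank_span_le (R := ℂ) (M := M) S
    rw [hSspan] at this
    have h1 : Module.rank ℂ (⊤ : Submodule ℂ M) = Module.rank ℂ M := rank_top ℂ M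
    calc Module.rank ℂ M = Module.rank ℂ (⊤ : Submodule ℂ M) := h1.symm
      _ ≤ Cardinal.mk S := this
      _ ≤ Cardinal.aleph0 := by
          rw [Cardinal.mk_le_aleph0_iff]
          exact hScount
  -- x is algebraic over ℂ
  have halg : IsAlgebraic ℂ x := by
    by_contra htr
    have hli := aux_li (F := ℂ) (D := D) (x := x) htr
    have hli2 : LinearIndependent ℂ fun a : ℂ => φ ((x - algebraMap ℂ D a)⁻¹) :=
      hli.map' φ (LinearMap.ker_eq_bot.mpr hφ)
    have hcard := hli2.cardinal_lift_le_rank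
    have : Cardinal.mk ℂ ≤ Cardinal.aleph0 := by
      rw [← Cardinal.lift_le_aleph0]
      calc Cardinal.lift.{_} (Cardinal.mk ℂ) ≤ Cardinal.lift.{_} (Module.rank ℂ M) := hcard
        _ ≤ Cardinal.aleph0 := by rwa [Cardinal.lift_le_aleph0]
    rw [Cardinal.mk_complex] at this
    exact absurd this (not_le.mpr Cardinal.aleph0_lt_continuum)
  -- minpoly has degree one
  have hint : IsIntegral ℂ x := halg.isIntegral
  have hirr := minpoly.irreducible hint
  have hdeg : (minpoly ℂ x).degree = 1 := IsAlgClosed.degree_eq_one_of_irreducible ℂ hirr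
  set q := minpoly ℂ x with hq
  have hmonic : q.Monic := minpoly.monic hint
  have hnd : q.natDegree = 1 := Polynomial.natDegree_eq_of_degree_eq_some hdeg
  have hc1 : q.coeff 1 = 1 := by
    have h := hmonic.coeff_natDegree
    rwa [hnd] at h
  have hqform : q = Polynomial.X - Polynomial.C (-(q.coeff 0)) := by
    have h := Polynomial.eq_X_add_C_of_degree_le_one (le_of_eq hdeg)
    conv_lhs => rw [h]
    rw [hc1, map_one, one_mul, map_neg, sub_neg_eq_add]
  have haeval : Polynomial.aeval x q = 0 := minpoly.aeval ℂ x
  rw [hqform] at haeval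
  simp only [map_sub, Polynomial.aeval_X, Polynomial.aeval_C] at haeval
  have hx : x = algebraMap ℂ D (-(q.coeff 0)) := by
    rwa [sub_eq_zero] at haeval
  refine ⟨-(q.coeff 0), fun v => ?_⟩
  have : x v = (algebraMap ℂ D (-(q.coeff 0))) v := by rw [hx]
  rw [Module.algebraMap_end_apply] at this
  exact this
end
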